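/- arXiv:2503.20987 — 2 statements merged into one kernel-verified Lean document; each statement's English description precedes it below -/
import Mathlib

section
/- Let P₀, P₁, …, P_T be probability measures on ℝ² with finite first moments, let err_i(f) := E_{P_i}[|a − r|] denote the expected absolute error under P_i, and let λ* := min over f in some family Ω (assume the minimum is attained) of (1/T)·Σ_{i=1}^{T} err_i(f) + err_0(f). Then for every f ∈ Ω: err_0(f) ≤ (1/T)·Σ_{i=1}^{T} err_i(f) + (1/T)·Σ_{i=1}^{T} W¹(P₀, P_i) + 2λ*, where W¹ is the order-1 Wasserstein distance induced by the ℓ¹-norm on ℝ². -/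
/-!
The loss `(a, r) ↦ |a - r|` is 1-Lipschitz for the ℓ¹ cost on `ℝ²`, so under any coupling its
expectations under the two marginals differ by at most the expected transport cost; taking the
infimum over couplings gives `err₀(f) ≤ errᵢ(f) + W¹(P₀, Pᵢ)` for each source domain.
Averaging over the `T` sources yields the bound, and `2 λ* ≥ 0` is slack.
-/

open MeasureTheory

/-- Order-1 Wasserstein distance between measures on ℝ², induced by the ℓ¹-norm. -/
noncomputable def W1 (P Q : Measure (ℝ × ℝ)) : ℝ :=
  sInf { c : ℝ | ∃ π : Measure ((ℝ × ℝ) × (ℝ × ℝ)),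
    π.map Prod.fst = P ∧ π.map Prod.snd = Q ∧
    c = ∫ z, (|z.1.1 - z.2.1| + |z.1.2 - z.2.2|) ∂π }

lemma abs_sub_le_abs_sub_add_l1 (x y : ℝ × ℝ) :
    |x.1 - x.2| ≤ |y.1 - y.2| + (|x.1 - y.1| + |x.2 - y.2|) := by
  have h₁ := abs_sub_le x.1 y.1 x.2
  have h₂ := abs_sub_le y.1 y.2 x.2
  rw [abs_sub_comm y.2 x.2] at h₂
  linarith

lemma integrable_abs_sub_of_integrable_l1 {P : Measure (ℝ × ℝ)}
    (hP : Integrable (fun p => |p.1| + |p.2|) P) :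
    Integrable (fun p : ℝ × ℝ => |p.1 - p.2|) P :=
  hP.mono' (measurable_fst.sub measurable_snd).abs.aestronglyMeasurable <|
    .of_forall fun p => by simpa only [Real.norm_eq_abs, abs_abs] using abs_sub p.1 p.2

section Coupling

variable {P Q : Measure (ℝ × ℝ)} {π : Measure ((ℝ × ℝ) × (ℝ × ℝ))}

lemma integrable_l1_cost_of_map_fst_of_map_snd (h₁ : π.map Prod.fst = P)
    (h₂ : π.map Prod.snd = Q) (hP : Integrable (fun p => |p.1| + |p.2|) P)
    (hQ : Integrable (fun p => |p.1| + |p.2|) Q) :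
    Integrable (fun z : (ℝ × ℝ) × (ℝ × ℝ) => |z.1.1 - z.2.1| + |z.1.2 - z.2.2|) π := by
  have hfst := (h₁ ▸ hP).comp_measurable measurable_fst
  have hsnd := (h₂ ▸ hQ).comp_measurable measurable_snd
  refine (hfst.add hsnd).mono' ?_ (.of_forall fun z => ?_)
  · fun_prop
  · have := abs_sub z.1.1 z.2.1
    have := abs_sub z.1.2 z.2.2
    rw [Real.norm_eq_abs, abs_of_nonneg (by positivity)]
    simp only [Function.comp_apply, Pi.add_apply]
    linarith

lemma integral_sub_integral_le_integral_l1_cost {g : ℝ × ℝ → ℝ}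
    (hgP : Integrable g P) (hgQ : Integrable g Q)
    (hg : ∀ x y, g x ≤ g y + (|x.1 - y.1| + |x.2 - y.2|))
    (h₁ : π.map Prod.fst = P) (h₂ : π.map Prod.snd = Q)
    (hP : Integrable (fun p => |p.1| + |p.2|) P)
    (hQ : Integrable (fun p => |p.1| + |p.2|) Q) :
    ∫ p, g p ∂P - ∫ p, g p ∂Q ≤ ∫ z, (|z.1.1 - z.2.1| + |z.1.2 - z.2.2|) ∂π := by
  subst h₁ h₂
  have hfst : Integrable (fun z => g z.1) π := hgP.comp_measurable measurable_fst
  have hsnd : Integrable (fun z => g z.2) π := hgQ.comp_measurable measurable_snd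
  rw [integral_map measurable_fst.aemeasurable hgP.aestronglyMeasurable,
    integral_map measurable_snd.aemeasurable hgQ.aestronglyMeasurable, ← integral_sub hfst hsnd]
  exact integral_mono (hfst.sub hsnd) (integrable_l1_cost_of_map_fst_of_map_snd rfl rfl hP hQ)
    fun z => by linarith [hg z.1 z.2]

end Coupling

lemma integral_le_integral_add_W1 {P Q : Measure (ℝ × ℝ)} [IsProbabilityMeasure P]
    [IsProbabilityMeasure Q] {g : ℝ × ℝ → ℝ} (hgP : Integrable g P) (hgQ : Integrable g Q)
    (hg : ∀ x y, g x ≤ g y + (|x.1 - y.1| + |x.2 - y.2|))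
    (hP : Integrable (fun p => |p.1| + |p.2|) P)
    (hQ : Integrable (fun p => |p.1| + |p.2|) Q) :
    ∫ p, g p ∂P ≤ ∫ p, g p ∂Q + W1 P Q := by
  have hW1 : ∫ p, g p ∂P - ∫ p, g p ∂Q ≤ W1 P Q :=
    le_csInf ⟨_, P.prod Q, by simp [Measure.map_fst_prod], by simp [Measure.map_snd_prod], rfl⟩
      fun c ⟨π, h₁, h₂, hc⟩ => hc ▸ integral_sub_integral_le_integral_l1_cost hgP hgQ hg h₁ h₂ hP hQ
  linarith

lemma le_mean_add_mean {T : ℕ} (hT : 1 ≤ T) {a : ℝ} {b c : Fin T → ℝ}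
    (h : ∀ i, a ≤ b i + c i) :
    a ≤ (1 / (T : ℝ)) * (∑ i, b i) + (1 / (T : ℝ)) * (∑ i, c i) := by
  have hTpos : (0 : ℝ) < T := by exact_mod_cast hT
  have hsum : ∑ _i : Fin T, a ≤ ∑ i, (b i + c i) := Finset.sum_le_sum fun i _ => h i
  rw [Finset.sum_const, Finset.card_univ, Fintype.card_fin, nsmul_eq_mul,
    Finset.sum_add_distrib] at hsum
  rw [← mul_add, one_div, ← div_eq_inv_mul, le_div_iff₀ hTpos]
  linarith

theorem stmt1_general {α : Type*} [MeasurableSpace α] (T : ℕ) (hT : 1 ≤ T)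
    -- μ 0 is the out-of-sample domain, μ i for 1 ≤ i ≤ T are the source domains
    (μ : Fin (T + 1) → Measure (α × ℝ))
    (hprob : ∀ i, IsProbabilityMeasure (μ i))
    -- joint law of (f(x), r) on domain i
    (P : (α → ℝ) → Fin (T + 1) → Measure (ℝ × ℝ))
    (hP : ∀ f i, P f i = (μ i).map (fun p => (f p.1, p.2)))
    -- expected absolute error of f on domain i
    (err : (α → ℝ) → Fin (T + 1) → ℝ)
    (herr : ∀ f i, err f i = ∫ p, |f p.1 - p.2| ∂(μ i))
    -- finite first moments of the joint laws
    (hmom : ∀ f i, Integrable (fun p => |p.1| + |p.2|) (P f i))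
    -- the family Ω of admissible prediction functions
    (Ω : Set (α → ℝ)) (hΩmeas : ∀ f ∈ Ω, Measurable f)
    -- λ* : the ideal joint error, assumed attained on Ω
    (lam : ℝ)
    (hlam : ∃ f ∈ Ω, lam = (1 / (T : ℝ)) * (∑ i : Fin T, err f i.succ) + err f 0) :
    ∀ f ∈ Ω, err f 0 ≤ (1 / (T : ℝ)) * (∑ i : Fin T, err f i.succ)
      + (1 / (T : ℝ)) * (∑ i : Fin T, W1 (P f 0) (P f i.succ)) + 2 * lam := by
  intro f hf
  have hlam_nonneg : 0 ≤ lam := by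
    obtain ⟨g, -, rfl⟩ := hlam
    simp only [herr]
    positivity
  have hφ : Measurable fun p : α × ℝ => (f p.1, p.2) :=
    ((hΩmeas f hf).comp measurable_fst).prodMk measurable_snd
  have herr_law : ∀ i, err f i = ∫ p, |p.1 - p.2| ∂(P f i) := fun i => by
    rw [herr, hP, integral_map hφ.aemeasurable (by fun_prop)]
  have hlaw_prob : ∀ i, IsProbabilityMeasure (P f i) := fun i => by
    have := hprob i
    exact hP f i ▸ Measure.isProbabilityMeasure_map hφ.aemeasurable
  have hdomain : ∀ i : Fin T, err f 0 ≤ err f i.succ + W1 (P f 0) (P f i.succ) := fun i => by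
    rw [herr_law, herr_law]
    exact integral_le_integral_add_W1 (integrable_abs_sub_of_integrable_l1 (hmom f 0))
      (integrable_abs_sub_of_integrable_l1 (hmom f i.succ)) abs_sub_le_abs_sub_add_l1
      (hmom f 0) (hmom f i.succ)
  linarith [le_mean_add_mean hT hdomain]

theorem stmt1 {α : Type*} [MeasurableSpace α] (T : ℕ) (hT : 1 ≤ T)
    -- μ 0 is the out-of-sample domain, μ i for 1 ≤ i ≤ T are the source domains
    (μ : Fin (T + 1) → Measure (α × ℝ))
    (hprob : ∀ i, IsProbabilityMeasure (μ i))
    -- joint law of (f(x), r) on domain i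
    (P : (α → ℝ) → Fin (T + 1) → Measure (ℝ × ℝ))
    (hP : ∀ f i, P f i = (μ i).map (fun p => (f p.1, p.2)))
    -- expected absolute error of f on domain i
    (err : (α → ℝ) → Fin (T + 1) → ℝ)
    (herr : ∀ f i, err f i = ∫ p, |f p.1 - p.2| ∂(μ i))
    -- finite first moments of the joint laws
    (hmom : ∀ f i, Integrable (fun p => |p.1| + |p.2|) (P f i))
    -- the family Ω of admissible prediction functions
    (Ω : Set (α → ℝ)) (hΩmeas : ∀ f ∈ Ω, Measurable f)
    -- λ* : the ideal joint error, assumed attained on Ω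
    (lam : ℝ)
    (hlam : ∃ f ∈ Ω, lam = (1 / (T : ℝ)) * (∑ i : Fin T, err f i.succ) + err f 0)
    (hlam_min : ∀ f ∈ Ω, lam ≤ (1 / (T : ℝ)) * (∑ i : Fin T, err f i.succ) + err f 0) :
    ∀ f ∈ Ω, err f 0 ≤ (1 / (T : ℝ)) * (∑ i : Fin T, err f i.succ)
      + (1 / (T : ℝ)) * (∑ i : Fin T, W1 (P f 0) (P f i.succ)) + 2 * lam :=
  stmt1_general T hT μ hprob P hP err herr hmom Ω hΩmeas lam hlam
end

section
/- Let P and Q be two probability measures on ℝ^{K̃} × ℝ of the form: under P, (A, R) = (Z, ZᵀF_P + ε_P), and under Q, (A, R) = (Z, ZᵀF_Q + ε_Q), where Z has the same distribution under both measures with E[Z Zᵀ] = I, and ε_P, ε_Q are integrable noises. Then the order-1 Wasserstein distance induced by the ℓ¹-norm satisfies W¹(P, Q) ≤ E[|ε_P|] + E[|ε_Q|] + √K̃ · ‖F_P − F_Q‖₂. -/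
open MeasureTheory

/-- Order-1 Wasserstein distance on (ℝ^K̃) × ℝ induced by the ℓ¹-norm. -/
noncomputable def W1E (Kt : ℕ) (P Q : Measure (EuclideanSpace ℝ (Fin Kt) × ℝ)) : ℝ :=
  sInf { c : ℝ | ∃ π : Measure ((EuclideanSpace ℝ (Fin Kt) × ℝ) × (EuclideanSpace ℝ (Fin Kt) × ℝ)),
    π.map Prod.fst = P ∧ π.map Prod.snd = Q ∧
    c = ∫ z, ((∑ i, |z.1.1 i - z.2.1 i|) + |z.1.2 - z.2.2|) ∂π }

/-!
Couple `P` and `Q` through the common sample point `ω`: the feature coordinates then agree, so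
the transport cost is `E |Zᵀ(F_P - F_Q) + ε_P - ε_Q|`. Besides the two noise terms this leaves
`∑ E|Z i| |(F_P - F_Q) i|`, where `E|Z i| ≤ 1` because `E (Z i)² = 1`, and the `ℓ¹` norm is at most
`√K̃` times the Euclidean one.
-/

open Real

theorem EuclideanSpace.sum_abs_le_sqrt_card_mul_norm {ι : Type*} [Fintype ι]
    (x : EuclideanSpace ℝ ι) : ∑ i, |x i| ≤ √(Fintype.card ι) * ‖x‖ := by
  have hsq : (∑ i, |x i|) ^ 2 ≤ Fintype.card ι * ∑ i, |x i| ^ 2 := by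
    simpa using sq_sum_le_card_mul_sum_sq (s := Finset.univ) (f := fun i => |x i|)
  rw [EuclideanSpace.norm_eq, ← sqrt_mul (Nat.cast_nonneg _)]
  simpa using Real.le_sqrt_of_sq_le hsq

section Integrals

variable {Ω : Type*} [MeasurableSpace Ω] {μ : Measure Ω}

theorem integral_abs_add_sub_le {f g h : Ω → ℝ} (hf : Integrable f μ) (hg : Integrable g μ)
    (hh : Integrable h μ) :
    ∫ ω, |f ω + g ω - h ω| ∂μ ≤ ∫ ω, |f ω| ∂μ + ∫ ω, |g ω| ∂μ + ∫ ω, |h ω| ∂μ := by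
  have hfg : Integrable (fun ω => |f ω| + |g ω|) μ := hf.abs.add hg.abs
  rw [← integral_add hf.abs hg.abs, ← integral_add hfg hh.abs]
  refine integral_mono (hf.add hg |>.sub hh).abs (hfg.add hh.abs) fun ω => ?_
  calc |f ω + g ω - h ω| ≤ |f ω + g ω| + |h ω| := abs_sub _ _
    _ ≤ |f ω| + |g ω| + |h ω| := by gcongr; exact abs_add_le _ _

theorem EuclideanSpace.memLp_apply {ι : Type*} [Fintype ι] {p : ENNReal}
    {Z : Ω → EuclideanSpace ℝ ι} (hZ : MemLp Z p μ) (i : ι) : MemLp (fun ω => Z ω i) p μ :=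
  (EuclideanSpace.proj (𝕜 := ℝ) i).comp_memLp' hZ

variable [IsProbabilityMeasure μ]

theorem integral_abs_le_one_of_integral_sq_eq_one {X : Ω → ℝ} (hX : MemLp X 2 μ)
    (h : ∫ ω, X ω ^ 2 ∂μ = 1) : ∫ ω, |X ω| ∂μ ≤ 1 := by
  have hsq : Integrable (fun ω => (X ω ^ 2 + 1) / 2) μ :=
    (hX.integrable_sq.add (integrable_const 1)).div_const 2
  calc ∫ ω, |X ω| ∂μ ≤ ∫ ω, (X ω ^ 2 + 1) / 2 ∂μ :=
        integral_mono (hX.integrable one_le_two).abs hsq fun ω => by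
          nlinarith [sq_nonneg (|X ω| - 1), sq_abs (X ω)]
    _ = 1 := by
      rw [integral_div, integral_add hX.integrable_sq (integrable_const 1), h]
      norm_num

theorem integral_abs_sum_mul_le {ι : Type*} [Fintype ι] {Z : Ω → EuclideanSpace ℝ ι}
    (hZ : MemLp Z 2 μ) (hvar : ∀ i, ∫ ω, Z ω i ^ 2 ∂μ = 1) (D : EuclideanSpace ℝ ι) :
    ∫ ω, |∑ i, Z ω i * D i| ∂μ ≤ √(Fintype.card ι) * ‖D‖ := by
  have hZi : ∀ i, Integrable (fun ω => |Z ω i| * |D i|) μ := fun i =>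
    ((EuclideanSpace.memLp_apply hZ i).integrable one_le_two).abs.mul_const _
  calc ∫ ω, |∑ i, Z ω i * D i| ∂μ ≤ ∫ ω, ∑ i, |Z ω i| * |D i| ∂μ :=
        integral_mono_of_nonneg (.of_forall fun _ => abs_nonneg _)
          (integrable_finsetSum _ fun i _ => hZi i) (.of_forall fun ω => by
            simpa only [abs_mul] using Finset.abs_sum_le_sum_abs (fun i => Z ω i * D i) _)
    _ = ∑ i, (∫ ω, |Z ω i| ∂μ) * |D i| := by
        rw [integral_finsetSum _ fun i _ => hZi i]
        simp only [integral_mul_const]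
    _ ≤ ∑ i, |D i| := Finset.sum_le_sum fun i _ => mul_le_of_le_one_left (abs_nonneg _)
        (integral_abs_le_one_of_integral_sq_eq_one (EuclideanSpace.memLp_apply hZ i) (hvar i))
    _ ≤ √(Fintype.card ι) * ‖D‖ := D.sum_abs_le_sqrt_card_mul_norm

end Integrals

theorem W1E_le_integral {Kt : ℕ} {P Q : Measure (EuclideanSpace ℝ (Fin Kt) × ℝ)}
    (ρ : Measure ((EuclideanSpace ℝ (Fin Kt) × ℝ) × (EuclideanSpace ℝ (Fin Kt) × ℝ)))
    (hρP : ρ.map Prod.fst = P) (hρQ : ρ.map Prod.snd = Q) :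
    W1E Kt P Q ≤ ∫ z, ((∑ i, |z.1.1 i - z.2.1 i|) + |z.1.2 - z.2.2|) ∂ρ :=
  csInf_le ⟨0, by rintro c ⟨ρ', -, -, rfl⟩; exact integral_nonneg fun z => by positivity⟩
    ⟨ρ, hρP, hρQ, rfl⟩

theorem W1E_map_le_integral_abs_sub {Ω : Type*} [MeasurableSpace Ω] {μ : Measure Ω} {Kt : ℕ}
    {Z : Ω → EuclideanSpace ℝ (Fin Kt)} {Y Y' : Ω → ℝ} (hZ : AEMeasurable Z μ)
    (hY : AEMeasurable Y μ) (hY' : AEMeasurable Y' μ) :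
    W1E Kt (μ.map fun ω => (Z ω, Y ω)) (μ.map fun ω => (Z ω, Y' ω)) ≤
      ∫ ω, |Y ω - Y' ω| ∂μ := by
  refine (W1E_le_integral (μ.map fun ω => ((Z ω, Y ω), (Z ω, Y' ω)))
    (Measure.fst_map_prodMk₀ (hZ.prodMk hY')) (Measure.snd_map_prodMk₀ (hZ.prodMk hY))).trans_eq ?_
  rw [integral_map ((hZ.prodMk hY).prodMk (hZ.prodMk hY')) (by fun_prop : Continuous fun
    z : (EuclideanSpace ℝ (Fin Kt) × ℝ) × (EuclideanSpace ℝ (Fin Kt) × ℝ) =>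
      (∑ i, |z.1.1 i - z.2.1 i|) + |z.1.2 - z.2.2|).aestronglyMeasurable]
  simp

theorem stmt14_general {Ω : Type*} [MeasurableSpace Ω] (μ : Measure Ω) [IsProbabilityMeasure μ]
    (Kt : ℕ)
    (Z : Ω → EuclideanSpace ℝ (Fin Kt)) (hZL2 : MemLp Z 2 μ)
    (hI : ∀ i j, ∫ ω, Z ω i * Z ω j ∂μ = if i = j then (1 : ℝ) else 0)
    (FP FQ : EuclideanSpace ℝ (Fin Kt))
    (εP εQ : Ω → ℝ)
    (hεPint : Integrable εP μ) (hεQint : Integrable εQ μ)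
    (P Q : Measure (EuclideanSpace ℝ (Fin Kt) × ℝ))
    (hP : P = μ.map (fun ω => (Z ω, (∑ i, Z ω i * FP i) + εP ω)))
    (hQ : Q = μ.map (fun ω => (Z ω, (∑ i, Z ω i * FQ i) + εQ ω))) :
    W1E Kt P Q ≤ (∫ ω, |εP ω| ∂μ) + (∫ ω, |εQ ω| ∂μ) + Real.sqrt Kt * ‖FP - FQ‖ := by
  have hZ : AEMeasurable Z μ := hZL2.aestronglyMeasurable.aemeasurable
  have hεP := hεPint.aemeasurable
  have hεQ := hεQint.aemeasurable
  have hZD : Integrable (fun ω => ∑ i, Z ω i * (FP - FQ) i) μ :=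
    integrable_finsetSum _ fun i _ =>
      ((EuclideanSpace.memLp_apply hZL2 i).integrable one_le_two).mul_const _
  have hsignal : ∫ ω, |∑ i, Z ω i * (FP - FQ) i| ∂μ ≤ √Kt * ‖FP - FQ‖ := by
    simpa using integral_abs_sum_mul_le hZL2 (fun i => by simpa [sq] using hI i i) (FP - FQ)
  calc W1E Kt P Q
      ≤ ∫ ω, |((∑ i, Z ω i * FP i) + εP ω) - ((∑ i, Z ω i * FQ i) + εQ ω)| ∂μ := by
        rw [hP, hQ]; exact W1E_map_le_integral_abs_sub hZ (by fun_prop) (by fun_prop)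
    _ = ∫ ω, |(∑ i, Z ω i * (FP - FQ) i) + εP ω - εQ ω| ∂μ := by
        congr 1 with ω
        simp only [PiLp.sub_apply, mul_sub, Finset.sum_sub_distrib]
        congr 1
        ring
    _ ≤ _ := (integral_abs_add_sub_le hZD hεPint hεQint).trans (by linarith)

theorem stmt14 {Ω : Type*} [MeasurableSpace Ω] (μ : Measure Ω) [IsProbabilityMeasure μ]
    (Kt : ℕ) (hKt : 1 ≤ Kt)
    (Z : Ω → EuclideanSpace ℝ (Fin Kt)) (hZmeas : Measurable Z) (hZL2 : MemLp Z 2 μ)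
    (hI : ∀ i j, ∫ ω, Z ω i * Z ω j ∂μ = if i = j then (1 : ℝ) else 0)
    (FP FQ : EuclideanSpace ℝ (Fin Kt))
    (εP εQ : Ω → ℝ) (hεPmeas : Measurable εP) (hεQmeas : Measurable εQ)
    (hεPint : Integrable εP μ) (hεQint : Integrable εQ μ)
    (P Q : Measure (EuclideanSpace ℝ (Fin Kt) × ℝ))
    (hP : P = μ.map (fun ω => (Z ω, (∑ i, Z ω i * FP i) + εP ω)))
    (hQ : Q = μ.map (fun ω => (Z ω, (∑ i, Z ω i * FQ i) + εQ ω))) :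
    W1E Kt P Q ≤ (∫ ω, |εP ω| ∂μ) + (∫ ω, |εQ ω| ∂μ) + Real.sqrt Kt * ‖FP - FQ‖ :=
  stmt14_general μ Kt Z hZL2 hI FP FQ εP εQ hεPint hεQint P Q hP hQ
end
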